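/- For k ≥ 1 and l ≥ 2, with Θ^p L(a_1,…,a_p) = ∑_{I⊆{1,…,p}} (−1)^{|I|} L(∑_{i∈I} a_i), one has the composition identity: applying Θ^k in the first variable of Θ^l L (with the last l−1 variables held as parameters) equals −Θ^{k+l−1} L. Explicitly, ∑_{I⊆{1,…,k}} (−1)^{|I|} Θ^l L(∑_{i∈I} a_i, a_{k+1},…,a_{k+l−1}) = −Θ^{k+l−1} L(a_1,…,a_{k+l−1}). -/

import Mathlib

open Finset

/-- `Θ^p L (a) = ∑_{I ⊆ indices} (−1)^{|I|} • L(∑_{i∈I} a_i)`. -/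
def Theta {G M : Type*} [AddCommMonoid G] [AddCommGroup M]
    {ι : Type*} [Fintype ι] [DecidableEq ι] (L : G → M) (a : ι → G) : M :=
  ∑ I : Finset ι, (-1 : ℤ) ^ I.card • L (∑ i ∈ I, a i)

/-- The equivalence `Fin m ⊕ Unit ≃ Fin (m+1)` sending `inl j` to `j.succ` and `inr` to `0`. -/
def finSumUnitEquiv (m : ℕ) : Fin m ⊕ Unit ≃ Fin (m + 1) :=
  (Equiv.optionEquivSumPUnit (Fin m)).symm.trans (finSuccEquiv m).symm

@[simp] lemma finSumUnitEquiv_inl (m : ℕ) (j : Fin m) :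
    finSumUnitEquiv m (Sum.inl j) = j.succ := by
  simp [finSumUnitEquiv]

@[simp] lemma finSumUnitEquiv_inr (m : ℕ) (u : Unit) :
    finSumUnitEquiv m (Sum.inr u) = 0 := by
  simp [finSumUnitEquiv]

/-- Reindexing invariance of `Theta`. -/
lemma theta_reindex {G M : Type*} [AddCommMonoid G] [AddCommGroup M]
    {ι κ : Type*} [Fintype ι] [DecidableEq ι] [Fintype κ] [DecidableEq κ]
    (L : G → M) (e : ι ≃ κ) (a : κ → G) :
    Theta L (a ∘ e) = Theta L a := by
  unfold Theta
  refine Fintype.sum_equiv e.finsetCongr _ _ fun I => ?_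
  simp [Equiv.finsetCongr, Finset.sum_map]

/-- `Theta` on a sum type as a double sum. -/
lemma theta_sum_elim {G M : Type*} [AddCommMonoid G] [AddCommGroup M]
    {α β : Type*} [Fintype α] [DecidableEq α] [Fintype β] [DecidableEq β]
    (L : G → M) (a : α → G) (b : β → G) :
    Theta L (Sum.elim a b)
      = ∑ I : Finset α, ∑ J : Finset β,
          (-1 : ℤ) ^ (I.card + J.card) • L ((∑ i ∈ I, a i) + ∑ j ∈ J, b j) := by
  unfold Theta
  refine Eq.trans ?_ (Fintype.sum_prod_type
    (f := fun p : Finset α × Finset β =>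
      (-1 : ℤ) ^ (p.1.card + p.2.card) • L ((∑ i ∈ p.1, a i) + ∑ j ∈ p.2, b j)))
  refine (Fintype.sum_equiv
    ⟨fun p => p.1.disjSum p.2, fun u => (u.toLeft, u.toRight),
      fun p => by simp, fun u => Finset.toLeft_disjSum_toRight⟩ _ _ fun p => ?_).symm
  simp [Finset.card_disjSum, Finset.sum_sumElim]

/-- `Theta` of `Fin.cons x b`, decomposed according to whether the subset contains index `0`. -/
lemma theta_cons {G M : Type*} [AddCommMonoid G] [AddCommGroup M]
    {m : ℕ} (L : G → M) (x : G) (b : Fin m → G) :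
    Theta L (Fin.cons x b : Fin (m + 1) → G)
      = Theta L b - ∑ J : Finset (Fin m), (-1 : ℤ) ^ J.card • L ((∑ j ∈ J, b j) + x) := by
  have h : (Fin.cons x b : Fin (m+1) → G) ∘ finSumUnitEquiv m
      = Sum.elim b (fun _ : Unit => x) := by
    funext s
    cases s with
    | inl j => simp
    | inr u => simp
  rw [← theta_reindex L (finSumUnitEquiv m), h, theta_sum_elim]
  have huniv : (Finset.univ : Finset (Finset Unit)) = {∅, {Unit.unit}} := by decide
  have hsum : ∀ (J : Finset (Fin m)),
      ∑ T : Finset Unit, (-1 : ℤ) ^ (J.card + T.card) • L ((∑ j ∈ J, b j) + ∑ _t ∈ T, x)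
        = (-1 : ℤ) ^ J.card • L (∑ j ∈ J, b j)
          - (-1 : ℤ) ^ J.card • L ((∑ j ∈ J, b j) + x) := by
    intro J
    rw [huniv, Finset.sum_pair (by decide)]
    simp [pow_succ, sub_eq_add_neg]
  rw [Finset.sum_congr rfl fun J _ => hsum J, Finset.sum_sub_distrib]
  rfl

/-- for `k ≥ 1`, `l = m+1 ≥ 2`, applying `Θ^k` in the first
variable of `Θ^l L` (last `l−1` variables as parameters) gives `−Θ^{k+l−1}L`:
`∑_{I⊆{1,…,k}} (−1)^{|I|} Θ^l L(∑_{i∈I}a_i, b) = −Θ^{k+l−1}L(a,b)`,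
where `{1,…,k+l−1}` is modeled by `Fin k ⊕ Fin m`. -/
theorem theta_comp_theta {G M : Type*} [AddCommGroup G] [AddCommGroup M]
    (L : G → M) (k m : ℕ) (hk : 1 ≤ k) (hm : 1 ≤ m)
    (a : Fin k → G) (b : Fin m → G) :
    ∑ I : Finset (Fin k),
        (-1 : ℤ) ^ I.card • Theta L (Fin.cons (∑ i ∈ I, a i) b : Fin (m + 1) → G)
      = - Theta L (Sum.elim a b) := by
  have hzero : ∑ I : Finset (Fin k), (-1 : ℤ) ^ I.card = 0 := by
    rw [← Finset.powerset_univ]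
    exact Finset.sum_powerset_neg_one_pow_card_of_nonempty
      (Finset.univ_nonempty_iff.mpr (Fin.pos_iff_nonempty.mp (by omega)))
  calc ∑ I : Finset (Fin k),
        (-1 : ℤ) ^ I.card • Theta L (Fin.cons (∑ i ∈ I, a i) b : Fin (m + 1) → G)
      = ∑ I : Finset (Fin k), ((-1 : ℤ) ^ I.card • Theta L b
          - ∑ J : Finset (Fin m),
              (-1 : ℤ) ^ (I.card + J.card) • L ((∑ j ∈ J, b j) + ∑ i ∈ I, a i)) := by
        refine Finset.sum_congr rfl fun I _ => ?_
        rw [theta_cons, smul_sub, Finset.smul_sum]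
        congr 1
        refine Finset.sum_congr rfl fun J _ => ?_
        rw [smul_smul, ← pow_add]
    _ = - Theta L (Sum.elim a b) := by
        rw [Finset.sum_sub_distrib, ← Finset.sum_smul, hzero, zero_smul, zero_sub,
          theta_sum_elim, neg_inj]
        refine Finset.sum_congr rfl fun I _ => Finset.sum_congr rfl fun J _ => ?_
        rw [add_comm (∑ j ∈ J, b j)]
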